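/- arXiv:2506.15305 — 2 statements merged into one kernel-verified Lean document; each statement's English description precedes it below -/
import Mathlib

section
/- (Theorem 2.) Let Y and (Ŷₙ)ₙ be random variables, each nonnegative almost surely, such that Ŷₙ converges to Y in distribution as n → ∞, let r > 0, and let l̄ > 0 be a fixed maximal loan level. Then the expected-loss estimates converge uniformly over the loan decision space: sup_{l ∈ [0, l̄]} |E[(l − rŶₙ)⁺] − E[(l − rY)⁺]| → 0 as n → ∞. -/
open MeasureTheory Filter Set

/-- The truncated loss function `y ↦ min (max (l - r·y) 0) l` as a bounded continuous
function. It agrees with `y ↦ max (l - r·y) 0` on `[0, ∞)` when `l ≥ 0`. -/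
noncomputable def lossBCF (r l : ℝ) : BoundedContinuousFunction ℝ ℝ :=
  BoundedContinuousFunction.ofNormedAddCommGroup
    (fun y => min (max (l - r * y) 0) l)
    (by fun_prop) |l|
    (fun y => by
      rw [Real.norm_eq_abs, abs_le]
      refine ⟨le_min (le_trans (neg_nonpos.mpr (abs_nonneg l)) (le_max_right _ _))
        (neg_abs_le l), (min_le_right _ _).trans (le_abs_self l)⟩)

lemma lossBCF_apply (r l y : ℝ) : lossBCF r l y = min (max (l - r * y) 0) l := rfl

/-- Pointwise equi-Lipschitz estimate in the loan level `l`. -/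
lemma lossBCF_lip (r l l' y : ℝ) : |lossBCF r l y - lossBCF r l' y| ≤ |l - l'| := by
  rw [lossBCF_apply, lossBCF_apply]
  refine (abs_min_sub_min_le_max _ _ _ _).trans (max_le ?_ le_rfl)
  refine (abs_max_sub_max_le_max _ _ _ _).trans (max_le ?_ (by simp))
  simp [sub_sub_sub_cancel_right]

lemma integral_loss_eq (r : ℝ) (hr : 0 < r) (l : ℝ) (hl : 0 ≤ l) (m : Measure ℝ)
    (hm : m (Set.Iio 0) = 0) :
    ∫ y, max (l - r * y) 0 ∂m = ∫ y, lossBCF r l y ∂m := by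
  refine integral_congr_ae ?_
  have h0 : ∀ᵐ y ∂m, 0 ≤ y := by
    rw [ae_iff]
    convert hm using 2
    ext y; simp [not_le]
  filter_upwards [h0] with y hy
  rw [lossBCF_apply, min_eq_left]
  exact max_le (by nlinarith) hl

lemma integral_loss_lip (r l l' : ℝ) (m : Measure ℝ) [IsProbabilityMeasure m] :
    dist (∫ y, lossBCF r l y ∂m) (∫ y, lossBCF r l' y ∂m) ≤ |l - l'| := by
  rw [dist_eq_norm, ← integral_sub ((lossBCF r l).integrable m)
    ((lossBCF r l').integrable m)]
  calc ‖∫ y, (lossBCF r l y - lossBCF r l' y) ∂m‖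
      ≤ |l - l'| * (m Set.univ).toReal :=
        norm_integral_le_of_norm_le_const
          (Eventually.of_forall fun y => by
            rw [Real.norm_eq_abs]; exact lossBCF_lip r l l' y)
    _ = |l - l'| := by simp

/-- Theorem 2: If the laws `νₙ` of the generative outputs `Ŷₙ`
(nonnegative a.s.) converge weakly (i.e. `Ŷₙ ⇒ Y` in distribution) to the law `μ`
of the true sales `Y` (nonnegative a.s.), then for fixed `r > 0` and maximal loan
level `l̄ > 0`, the expected-loss estimates `l ↦ E[(l - r·Ŷₙ)⁺]` converge to
`l ↦ E[(l - r·Y)⁺]` uniformly over the loan decision space `[0, l̄]`. -/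
theorem expected_loss_uniform_convergence
    (μ : ProbabilityMeasure ℝ) (ν : ℕ → ProbabilityMeasure ℝ)
    (hμ : (μ : Measure ℝ) (Set.Iio 0) = 0)
    (hν : ∀ n, ((ν n : Measure ℝ)) (Set.Iio 0) = 0)
    (hconv : Tendsto ν atTop (nhds μ))
    (r : ℝ) (hr : 0 < r) (lbar : ℝ) (hlbar : 0 < lbar) :
    TendstoUniformlyOn
      (fun n l => ∫ y, max (l - r * y) 0 ∂(ν n : Measure ℝ))
      (fun l => ∫ y, max (l - r * y) 0 ∂(μ : Measure ℝ))
      atTop (Set.Icc 0 lbar) := by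
  set G : ℕ → ℝ → ℝ := fun n l => ∫ y, lossBCF r l y ∂(ν n : Measure ℝ) with hG
  set g : ℝ → ℝ := fun l => ∫ y, lossBCF r l y ∂(μ : Measure ℝ) with hg
  have hpt : ∀ l : ℝ, Tendsto (fun n => G n l) atTop (nhds (g l)) := fun l =>
    (ProbabilityMeasure.tendsto_iff_forall_integral_tendsto.mp hconv) (lossBCF r l)
  rw [Metric.tendstoUniformlyOn_iff]
  intro ε hε
  have hε3 : 0 < ε / 3 := by linarith
  obtain ⟨t, ht⟩ := (isCompact_Icc (a := (0:ℝ)) (b := lbar)).elim_finite_subcover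
    (fun x : ℝ => Metric.ball x (ε / 3)) (fun _ => Metric.isOpen_ball)
    (fun x _ => Set.mem_iUnion.mpr ⟨x, Metric.mem_ball_self hε3⟩)
  have hev : ∀ᶠ n in atTop, ∀ i ∈ t, dist (g i) (G n i) < ε / 3 :=
    t.eventually_all.mpr fun i _ => by
      filter_upwards [Metric.tendsto_nhds.mp (hpt i) (ε / 3) hε3] with n hn
      rw [dist_comm]; exact hn
  filter_upwards [hev] with n hn x hx
  obtain ⟨i, hi, hxi⟩ := Set.mem_iUnion₂.mp (ht hx)
  have hxi' : dist x i < ε / 3 := Metric.mem_ball.mp hxi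
  have hx0 : (0:ℝ) ≤ x := hx.1
  have e1 : (∫ y, max (x - r * y) 0 ∂(ν n : Measure ℝ)) = G n x :=
    integral_loss_eq r hr x hx0 _ (hν n)
  have e2 : (∫ y, max (x - r * y) 0 ∂(μ : Measure ℝ)) = g x :=
    integral_loss_eq r hr x hx0 _ hμ
  simp only [e1, e2]
  calc dist (g x) (G n x)
      ≤ dist (g x) (g i) + dist (g i) (G n i) + dist (G n i) (G n x) :=
        dist_triangle4 _ _ _ _
    _ < ε / 3 + ε / 3 + ε / 3 := by
        refine add_lt_add (add_lt_add_of_le_of_lt ?_ (hn i hi)) ?_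
        · exact (integral_loss_lip r x i (μ : Measure ℝ)).trans_lt (by rwa [← Real.dist_eq]) |>.le
        · exact (integral_loss_lip r i x (ν n : Measure ℝ)).trans_lt
            (by rw [← Real.dist_eq, dist_comm]; exact hxi')
    _ = ε := by ring
end

section
/- Let X and X̂ be random variables, each nonnegative almost surely, whose distributions are atomless (their cumulative distribution functions F and F̂ are continuous), and set δ = sup_{y ∈ [0, ∞)} |F̂(y) − F(y)|. Let ā > 0 and let g : ℝ → ℝ be continuously differentiable on [0, ā] with |g(y)| ≤ M and |g'(y)| ≤ K for all y ∈ [0, ā]. Then for every a ∈ [0, ā], |E[g(X̂) · 1{X̂ < a}] − E[g(X) · 1{X < a}]| ≤ (2M + K·a)·δ ≤ (2M + K·ā)·δ. -/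
/-!
Writing `g y = g a - ∫ t in y..a, g' t` and applying Fubini on the triangle `0 ≤ y < t ≤ a`
turns `E[g(X) 1{X < a}]` into `g a F(a) - ∫₀ᵃ g' F`, which is integration by parts against the
distribution of `X`; atomlessness identifies `P(X < t)` with `F t`. For two distributions the
boundary terms then differ by at most `M δ` and the integrals by at most `K a δ`.
-/

open MeasureTheory Set ProbabilityTheory

theorem ProbabilityTheory.measureReal_Iio_eq_cdf {ρ : Measure ℝ} [IsProbabilityMeasure ρ] {x : ℝ}
    (hx : ContinuousAt (cdf ρ) x) : ρ.real (Iio x) = cdf ρ x := by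
  have h := (cdf ρ).measure_Iio (tendsto_cdf_atBot ρ) x
  rw [measure_cdf, sub_zero, hx.continuousWithinAt.leftLim_eq] at h
  rw [measureReal_def, h, ENNReal.toReal_ofReal (cdf_nonneg ρ x)]

theorem setIntegral_Ico_intervalIntegral_eq_intervalIntegral_mul_measureReal {ρ : Measure ℝ}
    [IsFiniteMeasure ρ] {h : ℝ → ℝ} {a b : ℝ} (hab : a ≤ b) (hh : IntegrableOn h (Ioc a b)) :
    ∫ y in Ico a b, (∫ t in y..b, h t) ∂ρ = ∫ t in a..b, h t * ρ.real (Ico a t) := by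
  set k : ℝ → ℝ → ℝ := fun y t => if y < t then h t else 0
  have hk_integrable :
      Integrable (Function.uncurry k)
        ((ρ.restrict (Ico a b)).prod (volume.restrict (Ioc a b))) := by
    have : Function.uncurry k = {p : ℝ × ℝ | p.1 < p.2}.indicator (fun p => h p.2) := by
      ext ⟨y, t⟩; simp [k, indicator]
    rw [this]
    exact (hh.comp_snd _).indicator (measurableSet_lt measurable_fst measurable_snd)
  have hleft : ∀ y ∈ Ico a b, ∫ t in Ioc a b, k y t = ∫ t in y..b, h t := by
    intro y hy
    have : ∫ t in Ioc a b, k y t = ∫ t in Ioc a b ∩ Ioi y, h t := by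
      rw [← setIntegral_indicator measurableSet_Ioi]; rfl
    rw [this, Ioc_inter_Ioi, max_eq_right hy.1, intervalIntegral.integral_of_le hy.2.le]
  have hright : ∀ t ∈ Ioc a b, ∫ y in Ico a b, k y t ∂ρ = h t * ρ.real (Ico a t) := by
    intro t ht
    have : (fun y => k y t) = (Iio t).indicator (fun _ => h t) := by
      ext y; simp [k, indicator]
    rw [this, integral_indicator_const _ measurableSet_Iio,
      measureReal_restrict_apply measurableSet_Iio, inter_comm, Ico_inter_Iio, min_eq_right ht.2,
      smul_eq_mul, mul_comm]
  calc ∫ y in Ico a b, (∫ t in y..b, h t) ∂ρ = ∫ y in Ico a b, (∫ t in Ioc a b, k y t) ∂ρ :=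
        (setIntegral_congr_fun measurableSet_Ico hleft).symm
    _ = ∫ t in Ioc a b, ∫ y in Ico a b, k y t ∂ρ := integral_integral_swap hk_integrable
    _ = ∫ t in a..b, h t * ρ.real (Ico a t) := by
        rw [setIntegral_congr_fun measurableSet_Ioc hright, intervalIntegral.integral_of_le hab]

theorem setIntegral_Ico_eq_sub_integral_deriv_mul_measureReal {ρ : Measure ℝ} [IsFiniteMeasure ρ]
    {g g' : ℝ → ℝ} {a b : ℝ} (hab : a ≤ b) (hg : ContinuousOn g (Icc a b))
    (hderiv : ∀ t ∈ Ioo a b, HasDerivAt g (g' t) t) (hg' : IntegrableOn g' (Ioc a b)) :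
    ∫ y in Ico a b, g y ∂ρ = g b * ρ.real (Ico a b) - ∫ t in a..b, g' t * ρ.real (Ico a t) := by
  have hftc : ∀ y ∈ Ico a b, ∫ t in y..b, g' t = g b - g y := fun y hy =>
    intervalIntegral.integral_eq_sub_of_hasDerivAt_of_le hy.2.le
      (hg.mono (Icc_subset_Icc_left hy.1)) (fun t ht => hderiv t (Ioo_subset_Ioo_left hy.1 ht))
      ((intervalIntegrable_iff_integrableOn_Ioc_of_le hy.2.le).2
        (hg'.mono_set (Ioc_subset_Ioc_left hy.1)))
  have hg_integrable : IntegrableOn g (Ico a b) ρ :=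
    (hg.integrableOn_compact isCompact_Icc).mono_set Ico_subset_Icc_self
  rw [← setIntegral_Ico_intervalIntegral_eq_intervalIntegral_mul_measureReal hab hg',
    setIntegral_congr_fun measurableSet_Ico hftc, integral_sub (integrable_const _) hg_integrable,
    setIntegral_const, smul_eq_mul]
  ring

theorem ProbabilityTheory.abs_cdf_sub_cdf_le_iSup (μ ν : Measure ℝ) {s : Set ℝ} {y : ℝ}
    (hy : y ∈ s) : |cdf ν y - cdf μ y| ≤ ⨆ x : s, |cdf ν x - cdf μ x| :=
  le_ciSup (f := fun x : s => |cdf ν x - cdf μ x|)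
    ⟨1, by
      rintro _ ⟨x, rfl⟩
      exact abs_sub_le_of_nonneg_of_le (cdf_nonneg _ _) (cdf_le_one _ _) (cdf_nonneg _ _)
        (cdf_le_one _ _)⟩
    ⟨y, hy⟩

theorem ProbabilityTheory.integral_indicator_Iio_eq_sub_integral_deriv_mul_cdf {ρ : Measure ℝ}
    [IsProbabilityMeasure ρ] (hρ : ρ (Iio 0) = 0) (hcdf : Continuous (cdf ρ)) {g g' : ℝ → ℝ}
    {a : ℝ} (ha : 0 ≤ a) (hg : ContinuousOn g (Icc 0 a))
    (hderiv : ∀ t ∈ Ioo 0 a, HasDerivAt g (g' t) t) (hg' : IntegrableOn g' (Ioc 0 a)) :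
    ∫ y, (Iio a).indicator g y ∂ρ = g a * cdf ρ a - ∫ t in 0..a, g' t * cdf ρ t := by
  have hsupp (s : Set ℝ) : (s ∩ Ici 0 : Set ℝ) =ᵐ[ρ] s :=
    inter_ae_eq_left_of_ae_eq_univ (ae_eq_univ.2 (by rwa [compl_Ici]))
  have hIco (t : ℝ) : ρ.real (Ico 0 t) = cdf ρ t := by
    rw [← Iio_inter_Ici, measureReal_congr (hsupp _), measureReal_Iio_eq_cdf hcdf.continuousAt]
  rw [integral_indicator measurableSet_Iio, ← setIntegral_congr_set (hsupp (Iio a)), Iio_inter_Ici,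
    setIntegral_Ico_eq_sub_integral_deriv_mul_measureReal ha hg hderiv hg']
  simp_rw [hIco]

theorem abs_mul_sub_integral_mul_sub_le {g g' G₁ G₂ : ℝ → ℝ} {a M K δ : ℝ} (ha : 0 ≤ a)
    (h₁ : IntervalIntegrable (fun t => g' t * G₁ t) volume 0 a)
    (h₂ : IntervalIntegrable (fun t => g' t * G₂ t) volume 0 a) (hM : |g a| ≤ M)
    (hK : ∀ t ∈ Ioc 0 a, |g' t| ≤ K) (hδ : ∀ t ∈ Icc 0 a, |G₁ t - G₂ t| ≤ δ) :
    |(g a * G₁ a - ∫ t in 0..a, g' t * G₁ t) - (g a * G₂ a - ∫ t in 0..a, g' t * G₂ t)|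
      ≤ (M + K * a) * δ := by
  have hboundary : |g a * (G₁ a - G₂ a)| ≤ M * δ := by
    rw [abs_mul]
    exact mul_le_mul hM (hδ a ⟨ha, le_rfl⟩) (abs_nonneg _) ((abs_nonneg _).trans hM)
  have hintegral : |∫ t in 0..a, g' t * (G₁ t - G₂ t)| ≤ K * δ * a := by
    have := intervalIntegral.norm_integral_le_of_norm_le_const (a := 0) (b := a)
      (f := fun t => g' t * (G₁ t - G₂ t)) (C := K * δ) fun t ht => by
        rw [uIoc_of_le ha] at ht
        rw [Real.norm_eq_abs, abs_mul]
        exact mul_le_mul (hK t ht) (hδ t (Ioc_subset_Icc_self ht)) (abs_nonneg _)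
          ((abs_nonneg _).trans (hK t ht))
    rwa [sub_zero, abs_of_nonneg ha] at this
  have hsplit : (g a * G₁ a - ∫ t in 0..a, g' t * G₁ t) - (g a * G₂ a - ∫ t in 0..a, g' t * G₂ t)
      = g a * (G₁ a - G₂ a) - ∫ t in 0..a, g' t * (G₁ t - G₂ t) := by
    simp_rw [mul_sub]
    rw [intervalIntegral.integral_sub h₁ h₂]
    ring
  rw [hsplit]
  calc _ ≤ |g a * (G₁ a - G₂ a)| + |∫ t in 0..a, g' t * (G₁ t - G₂ t)| := abs_sub _ _
    _ ≤ M * δ + K * δ * a := add_le_add hboundary hintegral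
    _ = (M + K * a) * δ := by ring

/-- Let `X` and `X̂` be nonnegative (a.s.) random variables (represented by
their laws `μ` and `ν`) with continuous (atomless) CDFs `F` and `F̂`, and set
`δ = sup_{y ∈ [0,∞)} |F̂(y) - F(y)|`. If `g` is continuously differentiable on `[0, ā]`
with `|g| ≤ M` and `|g'| ≤ K` there, then for every `a ∈ [0, ā]`,
`|E[g(X̂)·1{X̂ < a}] - E[g(X)·1{X < a}]| ≤ (2M + K·a)·δ ≤ (2M + K·ā)·δ`. -/
theorem truncated_expectation_bound
    (μ ν : ProbabilityMeasure ℝ)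
    (hμ0 : (μ : Measure ℝ) (Set.Iio 0) = 0)
    (hν0 : (ν : Measure ℝ) (Set.Iio 0) = 0)
    (F Fhat : ℝ → ℝ)
    (hF : ∀ y, F y = ((μ : Measure ℝ) (Set.Iic y)).toReal)
    (hFhat : ∀ y, Fhat y = ((ν : Measure ℝ) (Set.Iic y)).toReal)
    (hFc : Continuous F) (hFhatc : Continuous Fhat)
    (δ : ℝ) (hδ : δ = ⨆ y : Set.Ici (0 : ℝ), |Fhat y - F y|)
    (abar M K : ℝ) (habar : 0 < abar)
    (g : ℝ → ℝ) (hg : ContDiffOn ℝ 1 g (Set.Icc 0 abar))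
    (hgM : ∀ y ∈ Set.Icc (0 : ℝ) abar, |g y| ≤ M)
    (hgK : ∀ y ∈ Set.Icc (0 : ℝ) abar, |derivWithin g (Set.Icc 0 abar) y| ≤ K) :
    ∀ a ∈ Set.Icc (0 : ℝ) abar,
      |(∫ y, (Set.Iio a).indicator g y ∂(ν : Measure ℝ))
          - ∫ y, (Set.Iio a).indicator g y ∂(μ : Measure ℝ)| ≤ (2 * M + K * a) * δ
      ∧ (2 * M + K * a) * δ ≤ (2 * M + K * abar) * δ := by
  intro a ⟨ha0, haa⟩
  obtain rfl : F = cdf μ := funext fun y => by rw [hF, cdf_eq_real, measureReal_def]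
  obtain rfl : Fhat = cdf ν := funext fun y => by rw [hFhat, cdf_eq_real, measureReal_def]
  set g' := derivWithin g (Icc 0 abar)
  have hsub : Icc 0 a ⊆ Icc 0 abar := Icc_subset_Icc_right haa
  have hderiv (t : ℝ) (ht : t ∈ Ioo 0 abar) : HasDerivAt g (g' t) t :=
    (hg.differentiableOn one_ne_zero t (Ioo_subset_Icc_self ht)).hasDerivWithinAt.hasDerivAt
      (Icc_mem_nhds ht.1 ht.2)
  have hg'c : ContinuousOn g' (Icc 0 a) :=
    (hg.continuousOn_derivWithin (uniqueDiffOn_Icc habar) le_rfl).mono hsub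
  have hrepr (ρ : ProbabilityMeasure ℝ) (hρ : (ρ : Measure ℝ) (Iio 0) = 0)
      (hc : Continuous (cdf ρ)) :=
    integral_indicator_Iio_eq_sub_integral_deriv_mul_cdf hρ hc ha0 (hg.continuousOn.mono hsub)
      (fun t ht => hderiv t (Ioo_subset_Ioo_right haa ht))
      (hg'c.integrableOn_Icc.mono_set Ioc_subset_Icc_self)
  have hint (G : ℝ → ℝ) (hG : Continuous G) :
      IntervalIntegrable (fun t => g' t * G t) volume 0 a :=
    (hg'c.mul hG.continuousOn).intervalIntegrable_of_Icc ha0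
  have hM : 0 ≤ M := (abs_nonneg _).trans (hgM 0 ⟨le_rfl, habar.le⟩)
  have hK : 0 ≤ K := (abs_nonneg _).trans (hgK 0 ⟨le_rfl, habar.le⟩)
  have hδle (t : ℝ) (ht : t ∈ Icc 0 a) : |cdf ν t - cdf μ t| ≤ δ :=
    hδ ▸ abs_cdf_sub_cdf_le_iSup μ ν (s := Ici 0) ht.1
  have hδ0 : 0 ≤ δ := (abs_nonneg _).trans (hδle 0 ⟨le_rfl, ha0⟩)
  rw [hrepr ν hν0 hFhatc, hrepr μ hμ0 hFc]
  refine ⟨(abs_mul_sub_integral_mul_sub_le ha0 (hint _ hFhatc) (hint _ hFc) (hgM a ⟨ha0, haa⟩)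
    (fun t ht => hgK t (hsub (Ioc_subset_Icc_self ht))) hδle).trans ?_, ?_⟩ <;> gcongr
  linarith
end
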